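/- Let G be a finite weighted graph with symmetric nonnegative conductances and connected skeleton, and let λ₁^{IP}(G) be the spectral gap of the interchange process generator L^{IP} f(η) = ∑_{xy} c_{xy}(f(η τ_{xy}) - f(η)) on permutations. Let H = {f : X_n → ℝ : ν[f | ξ_i] = 0 for all i}. Then H is an invariant subspace of L^{IP}, and every eigenvalue of -L^{IP} that is not an eigenvalue of -L^{RW} has all its eigenfunctions in H; consequently λ₁^{IP}(G) = min(λ₁^{RW}(G), μ₁^{IP}(G)), where μ₁^{IP}(G) is the smallest eigenvalue of -L^{IP} restricted to H. -/

import Mathlib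

/-!
Summing over a level set `{η : ξ_i(η) = x}` intertwines the two generators: the level sums of
`L^{IP} f` are `L^{RW}` applied to the level sums of `f`. Hence `H`, the common kernel of these
level-sum maps, is invariant, and an eigenfunction outside `H` has a nonzero level-sum vector
that is a random-walk eigenfunction with the same eigenvalue. Conversely `g ∘ ξ_i` lifts every
random-walk eigenfunction, so `λ₁^{IP} ≤ λ₁^{RW}`. Finally `μ₁^{IP} ≠ 0`: by the Dirichlet form,
a function killed by `L^{IP}` is invariant under the transpositions along the edges of `G`,
which generate the symmetric group when `G` is connected, so it is constant; and the only
constant in `H` is `0`.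
-/

open Finset Equiv

variable {n : ℕ}

/-- Interchange process generator: `L^{IP} f(η) = ∑_{x<y} c_{xy}(f(η τ_{xy}) - f(η))`. -/
def ipGen (c : Fin n → Fin n → ℝ) (f : Perm (Fin n) → ℝ) (η : Perm (Fin n)) : ℝ :=
  ∑ x : Fin n, ∑ y ∈ univ.filter (fun y => x < y),
    c x y * (f (η * Equiv.swap x y) - f η)

/-- Random walk generator: `L^{RW} g(x) = ∑_{y≠x} c_{xy}(g(y) - g(x))`. -/
def rwGen (c : Fin n → Fin n → ℝ) (g : Fin n → ℝ) (x : Fin n) : ℝ :=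
  ∑ y ∈ univ.erase x, c x y * (g y - g x)

/-- `f ∈ H` iff `ν[f | ξ_i] = 0` for every label `i`, i.e. the sum of `f` over every
level set `{η : ξ_i(η) = x}` (with `ξ_i(η) = η⁻¹ i`) vanishes. -/
def memH (f : Perm (Fin n) → ℝ) : Prop :=
  ∀ i x : Fin n, ∑ η ∈ univ.filter (fun η : Perm (Fin n) => η⁻¹ i = x), f η = 0

theorem sum_sum_lt_eq_half_sum_sum {α : Type*} [Fintype α] [LinearOrder α] (t : α → α → ℝ)
    (hsymm : ∀ x y, t x y = t y x) (hdiag : ∀ x, t x x = 0) :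
    ∑ x, ∑ y ∈ univ.filter (fun y => x < y), t x y = 2⁻¹ * ∑ x, ∑ y, t x y := by
  have hsplit : ∀ x y, t x y = (if x < y then t x y else 0) + (if y < x then t x y else 0) := by
    intro x y
    rcases lt_trichotomy x y with h | rfl | h
    · simp [h, h.not_gt]
    · simp [hdiag]
    · simp [h, h.not_gt]
  have hflip : ∑ x, ∑ y, (if y < x then t x y else 0) = ∑ x, ∑ y, (if x < y then t x y else 0) := by
    rw [Finset.sum_comm]
    simp_rw [hsymm]
  simp_rw [Finset.sum_filter]
  conv_rhs => rw [Finset.sum_congr rfl fun x _ => Finset.sum_congr rfl fun y _ => hsplit x y]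
  simp_rw [Finset.sum_add_distrib]
  rw [hflip]
  ring

theorem rwGen_eq_sum (c : Fin n → Fin n → ℝ) (g : Fin n → ℝ) (x : Fin n) :
    rwGen c g x = ∑ y, c x y * (g y - g x) := by
  rw [rwGen, Finset.sum_erase _ (by simp)]

theorem sum_sum_lt_mul_swap_apply_sub (c : Fin n → Fin n → ℝ) (hsymm : ∀ x y, c x y = c y x)
    (F : Fin n → ℝ) (x₀ : Fin n) :
    ∑ x, ∑ y ∈ univ.filter (fun y => x < y), c x y * (F (swap x y x₀) - F x₀) = rwGen c F x₀ := by
  rw [sum_sum_lt_eq_half_sum_sum _ (fun x y => by rw [hsymm, swap_comm]) (by simp)]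
  have hsupp : ∀ x y, c x y * (F (swap x y x₀) - F x₀) =
      (if x = x₀ then c x₀ y * (F y - F x₀) else 0) +
        (if y = x₀ then c x₀ x * (F x - F x₀) else 0) := by
    intro x y
    by_cases hx : x = x₀
    · subst hx
      by_cases hy : y = x <;> simp [hy]
    · by_cases hy : y = x₀
      · subst hy
        simp [hx, hsymm]
      · simp [hx, hy, swap_apply_of_ne_of_ne (Ne.symm hx) (Ne.symm hy)]
  simp_rw [hsupp, Finset.sum_add_distrib]
  simp [← rwGen_eq_sum]
  ring

-- `levelSum f i x = (n - 1)! • ν[f | ξ_i = x]`, where `ξ_i(η) = η⁻¹ i`.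
def levelSum (f : Perm (Fin n) → ℝ) (i x : Fin n) : ℝ :=
  ∑ η ∈ univ.filter (fun η : Perm (Fin n) => η⁻¹ i = x), f η

theorem levelSum_comp_mul_right (f : Perm (Fin n) → ℝ) (s : Perm (Fin n)) (i x : Fin n) :
    levelSum (fun η => f (η * s)) i x = levelSum f i (s⁻¹ x) := by
  refine Finset.sum_equiv (Equiv.mulRight s) (fun η => ?_) (fun η _ => rfl)
  simp only [mem_filter, mem_univ, true_and, coe_mulRight]
  rw [mul_inv_rev, Perm.mul_apply, EmbeddingLike.apply_eq_iff_eq]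

theorem levelSum_ipGen (c : Fin n → Fin n → ℝ) (hsymm : ∀ x y, c x y = c y x)
    (f : Perm (Fin n) → ℝ) (i : Fin n) :
    levelSum (ipGen c f) i = rwGen c (levelSum f i) := by
  funext x₀
  rw [← sum_sum_lt_mul_swap_apply_sub c hsymm]
  unfold levelSum ipGen
  rw [Finset.sum_comm]
  refine Finset.sum_congr rfl fun x _ => ?_
  rw [Finset.sum_comm]
  refine Finset.sum_congr rfl fun y _ => ?_
  rw [← Finset.mul_sum, Finset.sum_sub_distrib]
  have hshift := levelSum_comp_mul_right f (swap x y) i x₀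
  rw [swap_inv] at hshift
  simp only [levelSum] at hshift
  rw [hshift]

theorem ipGen_comp_inv_apply (c : Fin n → Fin n → ℝ) (hsymm : ∀ x y, c x y = c y x)
    (g : Fin n → ℝ) (i : Fin n) (η : Perm (Fin n)) :
    ipGen c (fun σ => g (σ⁻¹ i)) η = rwGen c g (η⁻¹ i) := by
  rw [← sum_sum_lt_mul_swap_apply_sub c hsymm]
  simp [ipGen, swap_inv]

theorem sum_mul_sub_mul_right {G : Type*} [Group G] [Fintype G] (f : G → ℝ) (s : G) :
    ∑ η, f η * (f (η * s) - f η) = -2⁻¹ * ∑ η, (f (η * s) - f η) ^ 2 := by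
  have hinv : ∑ η, f (η * s) ^ 2 = ∑ η, f η ^ 2 :=
    Fintype.sum_equiv (Equiv.mulRight s) _ _ fun _ => rfl
  have hexpand : ∀ η,
      (f (η * s) - f η) ^ 2 = f (η * s) ^ 2 - f η ^ 2 - 2 * (f η * (f (η * s) - f η)) :=
    fun η => by ring
  simp_rw [hexpand, Finset.sum_sub_distrib, hinv, ← Finset.mul_sum]
  ring

theorem sum_mul_ipGen (c : Fin n → Fin n → ℝ) (f : Perm (Fin n) → ℝ) :
    ∑ η, f η * ipGen c f η =
      -2⁻¹ * ∑ x, ∑ y ∈ univ.filter (fun y => x < y),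
        c x y * ∑ η, (f (η * swap x y) - f η) ^ 2 := by
  calc ∑ η, f η * ipGen c f η
      = ∑ x, ∑ y ∈ univ.filter (fun y => x < y),
          c x y * ∑ η, f η * (f (η * swap x y) - f η) := by
        simp only [ipGen, Finset.mul_sum]
        rw [Finset.sum_comm]
        refine Finset.sum_congr rfl fun x _ => ?_
        rw [Finset.sum_comm]
        exact Finset.sum_congr rfl fun y _ => Finset.sum_congr rfl fun η _ => by ring
    _ = _ := by
        rw [Finset.mul_sum]
        refine Finset.sum_congr rfl fun x _ => ?_
        rw [Finset.mul_sum]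
        refine Finset.sum_congr rfl fun y _ => ?_
        rw [sum_mul_sub_mul_right]
        ring

theorem mul_swap_apply_eq_of_ipGen_eq_zero (c : Fin n → Fin n → ℝ) (hnonneg : ∀ x y, 0 ≤ c x y)
    {f : Perm (Fin n) → ℝ} (hf : ∀ η, ipGen c f η = 0) {x y : Fin n} (hxy : x < y)
    (hc : 0 < c x y) (η : Perm (Fin n)) : f (η * swap x y) = f η := by
  have henergy : ∑ x, ∑ y ∈ univ.filter (fun y => x < y),
      c x y * ∑ η, (f (η * swap x y) - f η) ^ 2 = 0 := by
    have := sum_mul_ipGen c f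
    simp only [hf, mul_zero, Finset.sum_const_zero] at this
    linarith
  have hterm_nonneg : ∀ x y, 0 ≤ c x y * ∑ η, (f (η * swap x y) - f η) ^ 2 :=
    fun x y => mul_nonneg (hnonneg x y) (Finset.sum_nonneg fun _ _ => sq_nonneg _)
  rw [Finset.sum_eq_zero_iff_of_nonneg fun x _ => Finset.sum_nonneg fun y _ => hterm_nonneg x y]
    at henergy
  have hxy_term := (Finset.sum_eq_zero_iff_of_nonneg fun y _ => hterm_nonneg x y).mp
    (henergy x (mem_univ x)) y (by simpa using hxy)
  rw [mul_eq_zero, or_iff_right hc.ne',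
    Finset.sum_eq_zero_iff_of_nonneg fun _ _ => sq_nonneg _] at hxy_term
  exact sub_eq_zero.mp (pow_eq_zero_iff two_ne_zero |>.mp (hxy_term η (mem_univ η)))

theorem SimpleGraph.Connected.closure_swap_adj_eq_top {α : Type*} [Finite α] [DecidableEq α]
    {G : SimpleGraph α} (hG : G.Connected) :
    Subgroup.closure {σ : Perm α | ∃ x y, G.Adj x y ∧ swap x y = σ} = ⊤ := by
  rw [eq_top_iff, ← Perm.closure_isSwap, Subgroup.closure_le]
  rintro _ ⟨a, b, -, rfl⟩
  induction (SimpleGraph.reachable_iff_reflTransGen a b).mp (hG.preconnected a b) with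
  | refl => exact swap_self a ▸ one_mem _
  | tail _ hbc ih =>
    exact SubmonoidClass.swap_mem_trans _ ih (Subgroup.subset_closure ⟨_, _, hbc, rfl⟩)

theorem apply_eq_apply_one_of_closure_eq_top {G β : Type*} [Group G] {S : Set G}
    (hS : Subgroup.closure S = ⊤) {f : G → β} (hf : ∀ s ∈ S, ∀ η, f (η * s) = f η) (σ : G) :
    f σ = f 1 := by
  have hinv : ∀ σ ∈ Subgroup.closure S, ∀ η, f (η * σ) = f η := by
    intro σ hσ
    induction hσ using Subgroup.closure_induction with
    | mem s hs => exact hf s hs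
    | one => simp
    | mul σ τ _ _ hσ hτ => intro η; rw [← mul_assoc, hτ, hσ]
    | inv σ _ hσ => intro η; rw [← hσ, inv_mul_cancel_right]
  simpa using hinv σ (hS ▸ Subgroup.mem_top σ) 1

theorem apply_eq_apply_one_of_ipGen_eq_zero (c : Fin n → Fin n → ℝ) (hsymm : ∀ x y, c x y = c y x)
    (hnonneg : ∀ x y, 0 ≤ c x y)
    (hconn : (SimpleGraph.fromRel (fun x y : Fin n => 0 < c x y)).Connected)
    {f : Perm (Fin n) → ℝ} (hf : ∀ η, ipGen c f η = 0) (σ : Perm (Fin n)) : f σ = f 1 := by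
  refine apply_eq_apply_one_of_closure_eq_top hconn.closure_swap_adj_eq_top ?_ σ
  rintro _ ⟨a, b, hab, rfl⟩ η
  wlog hlt : a < b generalizing a b
  · rw [swap_comm]
    exact this b a hab.symm (hab.ne.lt_or_gt.resolve_left hlt)
  have hc : 0 < c a b := (SimpleGraph.fromRel_adj _ _ _ |>.mp hab).2.elim id (hsymm a b ▸ ·)
  exact mul_swap_apply_eq_of_ipGen_eq_zero c hnonneg hf hlt hc η

theorem memH.sum_eq_zero [NeZero n] {f : Perm (Fin n) → ℝ} (hf : memH f) : ∑ η, f η = 0 := by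
  rw [← Finset.sum_fiberwise univ (fun η : Perm (Fin n) => η⁻¹ 0) f]
  exact Finset.sum_eq_zero fun x _ => hf 0 x

theorem eq_zero_of_memH_of_ipGen_eq_zero [NeZero n] (c : Fin n → Fin n → ℝ)
    (hsymm : ∀ x y, c x y = c y x) (hnonneg : ∀ x y, 0 ≤ c x y)
    (hconn : (SimpleGraph.fromRel (fun x y : Fin n => 0 < c x y)).Connected)
    {f : Perm (Fin n) → ℝ} (hH : memH f) (hf : ∀ η, ipGen c f η = 0) : f = 0 := by
  have hconst := apply_eq_apply_one_of_ipGen_eq_zero c hsymm hnonneg hconn hf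
  have hsum := hH.sum_eq_zero
  simp only [hconst, Finset.sum_const, card_univ, nsmul_eq_mul, mul_eq_zero,
    Nat.cast_eq_zero, Fintype.card_ne_zero, false_or] at hsum
  funext σ
  rw [hconst, hsum, Pi.zero_apply]

theorem memH_ipGen (c : Fin n → Fin n → ℝ) (hsymm : ∀ x y, c x y = c y x)
    {f : Perm (Fin n) → ℝ} (hf : memH f) : memH (ipGen c f) := by
  intro i x
  have hzero : levelSum f i = 0 := funext (hf i)
  change levelSum (ipGen c f) i x = 0
  simp [levelSum_ipGen c hsymm, hzero, rwGen]

theorem memH_of_ipGen_eigen (c : Fin n → Fin n → ℝ) (hsymm : ∀ x y, c x y = c y x)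
    {lam : ℝ} {f : Perm (Fin n) → ℝ} (heig : ∀ η, -(ipGen c f η) = lam * f η)
    (hRW : ¬∃ g : Fin n → ℝ, g ≠ 0 ∧ ∀ x, -(rwGen c g x) = lam * g x) : memH f := by
  intro i x
  by_contra hx
  refine hRW ⟨levelSum f i, fun h => hx (congrFun h x), fun x₀ => ?_⟩
  rw [← levelSum_ipGen c hsymm]
  simp only [levelSum, ← Finset.sum_neg_distrib, heig, Finset.mul_sum]

theorem exists_ipGen_eigen_of_rwGen_eigen [NeZero n] (c : Fin n → Fin n → ℝ)
    (hsymm : ∀ x y, c x y = c y x) {lam : ℝ}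
    (hRW : ∃ g : Fin n → ℝ, g ≠ 0 ∧ ∀ x, -(rwGen c g x) = lam * g x) :
    ∃ f : Perm (Fin n) → ℝ, f ≠ 0 ∧ ∀ η, -(ipGen c f η) = lam * f η := by
  obtain ⟨g, hg, heig⟩ := hRW
  obtain ⟨z, hz⟩ := Function.ne_iff.mp hg
  refine ⟨fun σ => g (σ⁻¹ 0), fun h => hz ?_, fun η => ?_⟩
  · simpa [swap_inv] using congrFun h (swap 0 z)
  · rw [ipGen_comp_inv_apply c hsymm, heig]

/-- `H` is invariant under `L^{IP}`; every eigenvalue of `-L^{IP}` that is not an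
eigenvalue of `-L^{RW}` has all its eigenfunctions in `H`; and consequently
`λ₁^{IP} = min(λ₁^{RW}, μ₁^{IP})`, where `λ₁^{IP}`, `λ₁^{RW}` are the smallest nonzero
eigenvalues of `-L^{IP}`, `-L^{RW}` and `μ₁^{IP}` is the smallest eigenvalue of
`-L^{IP}` restricted to `H`. -/
theorem gap_decomposition [NeZero n] (c : Fin n → Fin n → ℝ)
    (hsymm : ∀ x y, c x y = c y x) (hnonneg : ∀ x y, 0 ≤ c x y)
    (hconn : (SimpleGraph.fromRel (fun x y : Fin n => 0 < c x y)).Connected) :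
    (∀ f : Perm (Fin n) → ℝ, memH f → memH (ipGen c f)) ∧
    (∀ (lam : ℝ) (f : Perm (Fin n) → ℝ), f ≠ 0 →
      (∀ η, -(ipGen c f η) = lam * f η) →
      ¬(∃ g : Fin n → ℝ, g ≠ 0 ∧ ∀ x, -(rwGen c g x) = lam * g x) →
      memH f) ∧
    (∀ lamIP lamRW mu : ℝ,
      (∃ f : Perm (Fin n) → ℝ, f ≠ 0 ∧ ∀ η, -(ipGen c f η) = lamIP * f η) →
      lamIP ≠ 0 →
      (∀ lam : ℝ, lam ≠ 0 →
        (∃ f : Perm (Fin n) → ℝ, f ≠ 0 ∧ ∀ η, -(ipGen c f η) = lam * f η) →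
        lamIP ≤ lam) →
      (∃ g : Fin n → ℝ, g ≠ 0 ∧ ∀ x, -(rwGen c g x) = lamRW * g x) →
      lamRW ≠ 0 →
      (∀ lam : ℝ, lam ≠ 0 →
        (∃ g : Fin n → ℝ, g ≠ 0 ∧ ∀ x, -(rwGen c g x) = lam * g x) →
        lamRW ≤ lam) →
      (∃ f : Perm (Fin n) → ℝ, f ≠ 0 ∧ memH f ∧ ∀ η, -(ipGen c f η) = mu * f η) →
      (∀ lam : ℝ,
        (∃ f : Perm (Fin n) → ℝ, f ≠ 0 ∧ memH f ∧ ∀ η, -(ipGen c f η) = lam * f η) →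
        mu ≤ lam) →
      lamIP = min lamRW mu) := by
  refine ⟨fun f => memH_ipGen c hsymm, fun lam f _ => memH_of_ipGen_eigen c hsymm, ?_⟩
  rintro lamIP lamRW mu ⟨f, hf0, hf⟩ hIP0 hIPmin hRW hRW0 hRWmin ⟨fH, hfH0, hfH, hfHeig⟩ hmumin
  have hmu0 : mu ≠ 0 := by
    rintro rfl
    exact hfH0 (eq_zero_of_memH_of_ipGen_eq_zero c hsymm hnonneg hconn hfH
      fun η => by simpa using hfHeig η)
  refine le_antisymm (le_min ?_ ?_) ?_
  · exact hIPmin lamRW hRW0 (exists_ipGen_eigen_of_rwGen_eigen c hsymm hRW)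
  · exact hIPmin mu hmu0 ⟨fH, hfH0, hfHeig⟩
  · by_cases hlamRW : ∃ g : Fin n → ℝ, g ≠ 0 ∧ ∀ x, -(rwGen c g x) = lamIP * g x
    · exact (min_le_left _ _).trans (hRWmin lamIP hIP0 hlamRW)
    · exact (min_le_right _ _).trans
        (hmumin lamIP ⟨f, hf0, memH_of_ipGen_eigen c hsymm hf hlamRW, hf⟩)
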